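/- For n ≥ 2, the set of prefixes of length f_{2n} − 1 of words in A_n is a proper subset of the set of prefixes of length f_{2n} − 1 of words in the concatenation set B_nA_n; that is, A_n[1, f_{2n}−1] ⊊ (B_nA_n)[1, f_{2n}−1]. -/

import Mathlib

/-- The two-letter alphabet. -/
inductive Letter : Type
  | a : Letter
  | b : Letter
deriving DecidableEq

/-- A word is a finite sequence of letters. -/
abbrev Word := List Letter

/-- Concatenation set `UV = {uv : u ∈ U, v ∈ V}`. -/
def concatSet (U V : Set Word) : Set Word := {w | ∃ u ∈ U, ∃ v ∈ V, w = u ++ v}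

mutual
  /-- The sets `A_n` of inflated words (indexed so that `Aset 1 = {a}`). -/
  def Aset : ℕ → Set Word
    | 0 => ∅
    | 1 => {[Letter.a]}
    | n + 2 => concatSet (Bset (n + 1)) (concatSet (Aset (n + 1)) (Aset (n + 1)))
  /-- The sets `B_n` of inflated words (indexed so that `Bset 1 = {b}`). -/
  def Bset : ℕ → Set Word
    | 0 => ∅
    | 1 => {[Letter.b]}
    | n + 2 => concatSet (Aset (n + 1)) (Bset (n + 1)) ∪ concatSet (Bset (n + 1)) (Aset (n + 1))
end

/-- The sub-word `w[a,b] = w_a w_{a+1} … w_b` (1-indexed). -/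
def wordSlice (w : Word) (i j : ℕ) : Word := (w.drop (i - 1)).take (j - i + 1)

/-- `W[a,b] = {w[a,b] : w ∈ W}`. -/
def setSlice (W : Set Word) (i j : ℕ) : Set Word := {x | ∃ w ∈ W, x = wordSlice w i j}

/-- `x` is a sub-word (contiguous factor) of `w`. -/
def IsFactor (x w : Word) : Prop := ∃ u v : Word, w = u ++ x ++ v

/-- `F(S, m)`: the set of all sub-words of length `m` of words in `S`. -/
def FactorSet (S : Set Word) (m : ℕ) : Set Word :=
  {x | x.length = m ∧ ∃ w ∈ S, IsFactor x w}

/-- `F(A, m) = ⋃_{n ≥ 1} F(A_n, m)`. -/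
def FA (m : ℕ) : Set Word := ⋃ n ∈ {n : ℕ | 1 ≤ n}, FactorSet (Aset n) m

/-- `F(B, m) = ⋃_{n ≥ 1} F(B_n, m)`. -/
def FB (m : ℕ) : Set Word := ⋃ n ∈ {n : ℕ | 1 ≤ n}, FactorSet (Bset n) m

/-- The golden mean `τ = (1 + √5)/2`. -/
noncomputable def tau : ℝ := (1 + Real.sqrt 5) / 2

/-! Words of `A_n` have length `f_{2n}` and words of `B_n` length `f_{2n-1}`. Split
`w ∈ A_{n+1}` as `u x y` with `u ∈ B_n` and `x, y ∈ A_n`. For every `y' ∈ A_{n+1}` the word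
`(u x) y'` lies in `B_{n+1} A_{n+1}`, and it agrees with `w` on the first `f_{2n+2} - 1` letters
as soon as `y'` agrees with `y` on the first `f_{2n} - 1` letters. Such a `y'` exists because
these prefixes of `A_n` lift to `A_{n+1}`, which follows from the same construction one level
down. The inclusion is strict because every word of `A_{n+1}` ends in `aa`, so the last letter of
its prefix is `a`, whereas `B_{n+1} A_{n+1}` contains a word with `b` in that position. -/

open Letter List Nat

lemma mem_concatSet {U V : Set Word} {u v : Word} (hu : u ∈ U) (hv : v ∈ V) :
    u ++ v ∈ concatSet U V :=
  ⟨u, hu, v, hv, rfl⟩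

lemma length_of_mem_Aset_Bset (n : ℕ) :
    (∀ w ∈ Aset (n + 1), w.length = fib (2 * n + 2)) ∧
      ∀ w ∈ Bset (n + 1), w.length = fib (2 * n + 1) := by
  induction n with
  | zero =>
    constructor <;> rintro w rfl <;> rfl
  | succ n ih =>
    show (∀ w ∈ Aset (n + 2), w.length = fib (2 * n + 4)) ∧
      ∀ w ∈ Bset (n + 2), w.length = fib (2 * n + 3)
    obtain ⟨ihA, ihB⟩ := ih
    have fib_odd : fib (2 * n + 3) = fib (2 * n + 1) + fib (2 * n + 2) := fib_add_two
    have fib_even : fib (2 * n + 4) = fib (2 * n + 2) + fib (2 * n + 3) := fib_add_two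
    refine ⟨?_, ?_⟩
    · rintro _ ⟨u, hu, _, ⟨x, hx, y, hy, rfl⟩, rfl⟩
      simp only [length_append, ihB u hu, ihA x hx, ihA y hy]
      omega
    · rintro _ (⟨u, hu, v, hv, rfl⟩ | ⟨u, hu, v, hv, rfl⟩)
      · simp only [length_append, ihA u hu, ihB v hv]
        omega
      · simp only [length_append, ihB u hu, ihA v hv]
        omega

lemma length_of_mem_Aset {n : ℕ} {w : Word} (hw : w ∈ Aset (n + 1)) :
    w.length = fib (2 * n + 2) :=
  (length_of_mem_Aset_Bset n).1 w hw

lemma length_of_mem_Bset {n : ℕ} {w : Word} (hw : w ∈ Bset (n + 1)) :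
    w.length = fib (2 * n + 1) :=
  (length_of_mem_Aset_Bset n).2 w hw

lemma Aset_Bset_nonempty (n : ℕ) : (Aset (n + 1)).Nonempty ∧ (Bset (n + 1)).Nonempty := by
  induction n with
  | zero => exact ⟨⟨[a], rfl⟩, ⟨[b], rfl⟩⟩
  | succ n ih =>
    obtain ⟨⟨x, hx⟩, ⟨u, hu⟩⟩ := ih
    exact ⟨⟨_, mem_concatSet hu (mem_concatSet hx hx)⟩,
      ⟨_, Or.inr (mem_concatSet hu hx)⟩⟩

lemma suffix_of_mem_Aset {n : ℕ} {w : Word} (hw : w ∈ Aset (n + 2)) : [a, a] <:+ w := by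
  induction n generalizing w with
  | zero =>
    obtain ⟨u, hu, _, ⟨x, rfl, y, rfl, rfl⟩, rfl⟩ := hw
    exact ⟨u, rfl⟩
  | succ n ih =>
    obtain ⟨u, -, _, ⟨x, -, y, hy, rfl⟩, rfl⟩ := hw
    exact (ih hy).trans ((suffix_append x y).trans (suffix_append u _))

lemma getElem?_fib_sub_two_of_mem_Aset {n : ℕ} {w : Word} (hw : w ∈ Aset (n + 2)) :
    w[fib (2 * n + 4) - 2]? = some a := by
  obtain ⟨p, rfl⟩ := suffix_of_mem_Aset hw
  have hlen : (p ++ [a, a]).length = fib (2 * n + 4) := length_of_mem_Aset hw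
  simp only [length_append, length_cons, length_nil] at hlen
  rw [getElem?_append_right (by omega), show fib (2 * n + 4) - 2 - p.length = 0 by omega]
  rfl

lemma exists_mem_Aset_getElem?_eq_b (n : ℕ) :
    ∃ v ∈ Aset (n + 3), v[fib (2 * n + 4) - 2]? = some b := by
  induction n with
  | zero =>
    have hA2 : [b, a, a] ∈ Aset 2 := ⟨[b], rfl, [a, a], ⟨[a], rfl, [a], rfl, rfl⟩, rfl⟩
    exact ⟨[a, b] ++ ([b, a, a] ++ [b, a, a]),
      mem_concatSet (Or.inl ⟨[a], rfl, [b], rfl, rfl⟩) (mem_concatSet hA2 hA2), rfl⟩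
  | succ n ih =>
    show ∃ v ∈ Aset (n + 4), v[fib (2 * n + 6) - 2]? = some b
    obtain ⟨v, hv, hvb⟩ := ih
    obtain ⟨⟨r, hr⟩, ⟨u, hu⟩⟩ := Aset_Bset_nonempty (n + 2)
    have hu_len : u.length = fib (2 * n + 5) := length_of_mem_Bset hu
    have hv_len : v.length = fib (2 * n + 6) := length_of_mem_Aset hv
    have fib_even : fib (2 * n + 6) = fib (2 * n + 4) + fib (2 * n + 5) := fib_add_two
    have fib_ge : 2 ≤ fib (2 * n + 4) :=
      le_trans (by decide) (fib_mono (by omega : 3 ≤ 2 * n + 4))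
    refine ⟨u ++ (v ++ r), mem_concatSet hu (mem_concatSet hv hr), ?_⟩
    rw [getElem?_append_right (by omega), getElem?_append_left (by omega), hu_len,
      show fib (2 * n + 6) - 2 - fib (2 * n + 5) = fib (2 * n + 4) - 2 by omega, hvb]

lemma exists_mem_BA_getElem?_eq_b (n : ℕ) :
    ∃ v ∈ concatSet (Bset (n + 2)) (Aset (n + 2)), v[fib (2 * n + 4) - 2]? = some b := by
  cases n with
  | zero =>
    exact ⟨[a, b] ++ [b, a, a], mem_concatSet (Or.inl ⟨[a], rfl, [b], rfl, rfl⟩)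
      ⟨[b], rfl, [a, a], ⟨[a], rfl, [a], rfl, rfl⟩, rfl⟩, rfl⟩
  | succ n =>
    show ∃ v ∈ concatSet (Bset (n + 3)) (Aset (n + 3)), v[fib (2 * n + 6) - 2]? = some b
    obtain ⟨v, hv, hvb⟩ := exists_mem_Aset_getElem?_eq_b n
    obtain ⟨u, hu⟩ := (Aset_Bset_nonempty (n + 2)).2
    have hu_len : u.length = fib (2 * n + 5) := length_of_mem_Bset hu
    have fib_even : fib (2 * n + 6) = fib (2 * n + 4) + fib (2 * n + 5) := fib_add_two
    have fib_ge : 2 ≤ fib (2 * n + 4) :=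
      le_trans (by decide) (fib_mono (by omega : 3 ≤ 2 * n + 4))
    refine ⟨u ++ v, mem_concatSet hu hv, ?_⟩
    rw [getElem?_append_right (by omega), hu_len,
      show fib (2 * n + 6) - 2 - fib (2 * n + 5) = fib (2 * n + 4) - 2 by omega, hvb]

lemma take_image_Aset_subset_BA_of_subset (n : ℕ)
    (hlift : take (fib (2 * n + 2) - 1) '' Aset (n + 1) ⊆
      take (fib (2 * n + 2) - 1) '' Aset (n + 2)) :
    take (fib (2 * n + 4) - 1) '' Aset (n + 2) ⊆
      take (fib (2 * n + 4) - 1) '' concatSet (Bset (n + 2)) (Aset (n + 2)) := by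
  rintro _ ⟨_, ⟨u, hu, _, ⟨x, hx, y, hy, rfl⟩, rfl⟩, rfl⟩
  obtain ⟨y', hy', hy'y⟩ := hlift ⟨y, hy, rfl⟩
  have hux_len : (u ++ x).length = fib (2 * n + 3) := by
    rw [length_append, length_of_mem_Bset hu, length_of_mem_Aset hx]
    exact fib_add_two.symm
  have fib_even : fib (2 * n + 4) = fib (2 * n + 2) + fib (2 * n + 3) := fib_add_two
  have fib_pos : 0 < fib (2 * n + 2) := fib_pos.mpr (by omega)
  refine ⟨(u ++ x) ++ y', mem_concatSet (Or.inr (mem_concatSet hu hx)) hy', ?_⟩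
  rw [← append_assoc,
    show fib (2 * n + 4) - 1 = (u ++ x).length + (fib (2 * n + 2) - 1) by omega,
    take_length_add_append, take_length_add_append, hy'y]

lemma take_image_Aset_subset_succ (n : ℕ) :
    take (fib (2 * n + 2) - 1) '' Aset (n + 1) ⊆ take (fib (2 * n + 2) - 1) '' Aset (n + 2) := by
  induction n with
  | zero =>
    obtain ⟨z, hz⟩ := (Aset_Bset_nonempty 1).1
    rintro _ ⟨y, -, rfl⟩
    exact ⟨z, hz, rfl⟩
  | succ n ih =>
    show take (fib (2 * n + 4) - 1) '' Aset (n + 2) ⊆ take (fib (2 * n + 4) - 1) '' Aset (n + 3)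
    rintro _ ⟨y, hy, rfl⟩
    obtain ⟨_, ⟨p, hp, r, hr, rfl⟩, hpr⟩ :=
      take_image_Aset_subset_BA_of_subset n ih ⟨y, hy, rfl⟩
    obtain ⟨s, hs⟩ := (Aset_Bset_nonempty (n + 1)).1
    refine ⟨p ++ (r ++ s), mem_concatSet hp (mem_concatSet hr hs), ?_⟩
    have hr_len : r.length = fib (2 * n + 4) := length_of_mem_Aset hr
    rw [← hpr, ← append_assoc, take_append_of_le_length (by simp only [length_append]; omega)]

lemma take_image_Aset_subset_BA (n : ℕ) :
    take (fib (2 * n + 4) - 1) '' Aset (n + 2) ⊆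
      take (fib (2 * n + 4) - 1) '' concatSet (Bset (n + 2)) (Aset (n + 2)) :=
  take_image_Aset_subset_BA_of_subset n (take_image_Aset_subset_succ n)

lemma setSlice_one_eq_image_take (W : Set Word) {k : ℕ} (hk : 1 ≤ k) :
    setSlice W 1 k = take k '' W := by
  ext x
  simp only [setSlice, wordSlice, Nat.sub_self, drop_zero, Nat.sub_add_cancel hk]
  exact ⟨fun ⟨w, hw, hx⟩ => ⟨w, hw, hx.symm⟩,
    fun ⟨w, hw, hx⟩ => ⟨w, hw, hx.symm⟩⟩

theorem prefix_Aset_ssubset_BA (n : ℕ) (hn : 2 ≤ n) :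
    setSlice (Aset n) 1 (Nat.fib (2 * n) - 1) ⊂
      setSlice (concatSet (Bset n) (Aset n)) 1 (Nat.fib (2 * n) - 1) := by
  obtain ⟨n, rfl⟩ : ∃ m, n = m + 2 := ⟨n - 2, by omega⟩
  have fib_ge : 3 ≤ fib (2 * n + 4) :=
    le_trans (by decide) (fib_mono (by omega : 4 ≤ 2 * n + 4))
  rw [show 2 * (n + 2) = 2 * n + 4 by ring, setSlice_one_eq_image_take _ (by omega),
    setSlice_one_eq_image_take _ (by omega)]
  refine ⟨take_image_Aset_subset_BA n, fun hsub => ?_⟩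
  obtain ⟨v, hv, hvb⟩ := exists_mem_BA_getElem?_eq_b n
  obtain ⟨w, hw, hwv⟩ := hsub ⟨v, hv, rfl⟩
  have hlast : ∀ u : Word, (u.take (fib (2 * n + 4) - 1))[fib (2 * n + 4) - 2]? =
      u[fib (2 * n + 4) - 2]? := fun u => getElem?_take_of_lt (by omega)
  have a_eq_b := hlast w
  rw [hwv, hlast, hvb, getElem?_fib_sub_two_of_mem_Aset hw] at a_eq_b
  cases a_eq_b
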